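/- For every integer n ≥ 6, the upper rank of the additive semigroup A^+(B_n) is r4(A^+(B_n)) = (n!)·n² + n. -/

import Mathlib

/-- The Brandt semigroup `B_n`, modeled as `Option (Fin n × Fin n)` where
`none` plays the role of the (two-sided) zero element `ϑ`. -/
def Brandt (n : ℕ) : Type := Option (Fin n × Fin n)

instance (n : ℕ) : DecidableEq (Brandt n) :=
  inferInstanceAs (DecidableEq (Option (Fin n × Fin n)))

instance (n : ℕ) : Fintype (Brandt n) :=
  inferInstanceAs (Fintype (Option (Fin n × Fin n)))

namespace Brandt

/-- The zero element `ϑ` of `B_n`. -/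
def theta (n : ℕ) : Brandt n := none

/-- The element `(i, j)` of `B_n`. -/
def pair {n : ℕ} (i j : Fin n) : Brandt n := some (i, j)

/-- The addition of the Brandt semigroup:
`(i,j) + (k,l) = (i,l)` if `j = k` and `ϑ` otherwise; `ϑ` is absorbing. -/
def add {n : ℕ} : Option (Fin n × Fin n) → Option (Fin n × Fin n) → Option (Fin n × Fin n)
  | some (i, j), some (k, l) => if j = k then some (i, l) else none
  | _, _ => none

instance (n : ℕ) : Add (Brandt n) := ⟨fun a b => Brandt.add a b⟩

end Brandt

/-- `M(B_n)`: all self-maps of `B_n`, with pointwise addition. -/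
abbrev MB (n : ℕ) := Brandt n → Brandt n

/-- `g` is an endomorphism of `(B_n, +)`. -/
def IsEndo {n : ℕ} (g : MB n) : Prop := ∀ a b : Brandt n, g (a + b) = g a + g b

/-- `g` is an automorphism of `(B_n, +)`. -/
def IsAuto {n : ℕ} (g : MB n) : Prop := IsEndo g ∧ Function.Bijective g

/-- The constant map `ξ_c` on `B_n` with value `c`. -/
def xi {n : ℕ} (c : Brandt n) : MB n := fun _ => c

/-- `C_{B_n}`, the set of all constant maps on `B_n`. -/
def ConstMaps (n : ℕ) : Set (MB n) := {f | ∃ c : Brandt n, f = xi c}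

/-- `f` is an affine map: a sum of an endomorphism and a constant map. -/
def IsAffine {n : ℕ} (f : MB n) : Prop := ∃ g c, IsEndo g ∧ f = g + xi c

/-- `A^+(B_n)`: the subsemigroup of `(M(B_n), +)` generated by the affine maps. -/
def Aplus (n : ℕ) : AddSubsemigroup (MB n) := AddSubsemigroup.closure {f | IsAffine f}

/-- `A^+(B_n)` as a set of maps. -/
def AplusSet (n : ℕ) : Set (MB n) := (Aplus n : Set (MB n))

/-- The support of `f`: the set of elements not mapped to `ϑ`. -/
def supp {n : ℕ} (f : MB n) : Set (Brandt n) := {a | f a ≠ Brandt.theta n}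

/-- `X_k`: the set of `k`-support elements of `X`. -/
def supportPart {n : ℕ} (X : Set (MB n)) (k : ℕ) : Set (MB n) :=
  {f ∈ X | (supp f).ncard = k}

/-- A subset `U` of an additive semigroup is independent if no element of `U`
lies in the subsemigroup generated by the remaining elements of `U`. -/
def IndepSet {β : Type*} [Add β] (U : Set β) : Prop :=
  ∀ a ∈ U, a ∉ AddSubsemigroup.closure (U \ {a})

/-- The `n`-support map `(p, q; σ)`, sending `(i, p)` to `(iσ, q)` and
everything else to `ϑ`. -/
def nMap {n : ℕ} (p q : Fin n) (σ : Equiv.Perm (Fin n)) : MB n := fun a =>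
  Option.elim (α := Fin n × Fin n) a (Brandt.theta n)
    (fun x => if x.2 = p then Brandt.pair (σ x.1) q else Brandt.theta n)

/-- The singleton support map `⟨(k, l), α⟩`, sending `(k, l)` to `α` and
everything else to `ϑ`. -/
def sMap {n : ℕ} (k l : Fin n) (α : Brandt n) : MB n :=
  fun a => if a = Brandt.pair k l then α else Brandt.theta n

/-- The set `S = {ξ_(i, i+1) : i ∈ [n-1]} ∪ {ξ_(n, 1)}`, i.e. the constant maps
`ξ_(i, i+1)` where the successor is taken cyclically in `[n]`. -/
def setS (n : ℕ) : Set (MB n) := {f | ∃ i : Fin n, f = xi (Brandt.pair i (finRotate n i))}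

/-- The set `T = {g + h : g ∈ Aut(B_n), h ∈ S}`. -/
def setT (n : ℕ) : Set (MB n) := {f | ∃ g h, IsAuto g ∧ h ∈ setS n ∧ f = g + h}
namespace BrandtProof

open Equiv

variable {n : ℕ}

theorem badd (a b : Brandt n) : a + b = Brandt.add a b := rfl

theorem theta_add (a : Brandt n) : Brandt.theta n + a = Brandt.theta n := by
  cases a <;> rfl

theorem add_theta (a : Brandt n) : a + Brandt.theta n = Brandt.theta n := by
  cases a <;> rfl

theorem pair_add_pair (i j k l : Fin n) :
    Brandt.pair i j + Brandt.pair k l =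
      if j = k then Brandt.pair i l else Brandt.theta n := rfl

theorem pair_ne_theta (i j : Fin n) : Brandt.pair i j ≠ Brandt.theta n := by
  simp [Brandt.pair, Brandt.theta]
  exact Option.some_ne_none _

theorem mb_add_apply (f g : MB n) (a : Brandt n) : (f + g) a = f a + g a := rfl

@[simp] theorem xi_apply (c : Brandt n) (a : Brandt n) : xi c a = c := rfl

theorem nMap_apply_none (p q : Fin n) (σ : Perm (Fin n)) :
    nMap p q σ (Brandt.theta n) = Brandt.theta n := rfl

theorem nMap_apply_pair (p q : Fin n) (σ : Perm (Fin n)) (x y : Fin n) :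
    nMap p q σ (Brandt.pair x y) =
      if y = p then Brandt.pair (σ x) q else Brandt.theta n := rfl

theorem sMap_apply (k l : Fin n) (α : Brandt n) (a : Brandt n) :
    sMap k l α a = if a = Brandt.pair k l then α else Brandt.theta n := rfl

end BrandtProof
namespace BrandtProof

open Equiv

variable {n : ℕ}

theorem pair_eq_pair {i j k l : Fin n} :
    Brandt.pair i j = Brandt.pair k l ↔ i = k ∧ j = l := by
  have : (some (i, j) : Option (Fin n × Fin n)) = some (k, l) ↔ i = k ∧ j = l := by
    simp [Prod.ext_iff]
  exact this

theorem theta_ne_pair (i j : Fin n) : Brandt.theta n ≠ Brandt.pair i j :=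
  fun h => pair_ne_theta i j h.symm

theorem sMap_theta (k l : Fin n) : sMap k l (Brandt.theta n) = xi (Brandt.theta n) := by
  funext a; simp [sMap, xi]

theorem t_cc (c c' : Brandt n) : xi c + xi c' = xi (c + c') := rfl

theorem t_thf (f : MB n) : xi (Brandt.theta n) + f = xi (Brandt.theta n) := by
  funext a; exact theta_add _

theorem t_fth (f : MB n) : f + xi (Brandt.theta n) = xi (Brandt.theta n) := by
  funext a; exact add_theta _

theorem t_cn (i j p q : Fin n) (σ : Perm (Fin n)) :
    xi (Brandt.pair i j) + nMap p q σ = sMap (σ.symm j) p (Brandt.pair i q) := by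
  funext a
  rcases a with _ | ⟨x, y⟩
  · rfl
  · show Brandt.pair i j + nMap p q σ (Brandt.pair x y)
        = sMap (σ.symm j) p (Brandt.pair i q) (Brandt.pair x y)
    rw [nMap_apply_pair, sMap_apply]
    by_cases hy : y = p <;> by_cases hx : x = σ.symm j <;>
      simp_all [pair_add_pair, pair_eq_pair, add_theta, Equiv.eq_symm_apply, eq_comm (b := j)]

end BrandtProof
namespace BrandtProof

open Equiv

variable {n : ℕ}

theorem t_nc_eq (p q l : Fin n) (σ : Perm (Fin n)) :
    nMap p q σ + xi (Brandt.pair q l) = nMap p l σ := by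
  funext a
  rcases a with _ | ⟨x, y⟩
  · rfl
  · show nMap p q σ (Brandt.pair x y) + _ = nMap p l σ (Brandt.pair x y)
    rw [nMap_apply_pair, nMap_apply_pair]
    by_cases hy : y = p <;>
      simp_all [pair_add_pair, theta_add, xi]

theorem t_nc_ne (p q k l : Fin n) (σ : Perm (Fin n)) (hqk : q ≠ k) :
    nMap p q σ + xi (Brandt.pair k l) = xi (Brandt.theta n) := by
  funext a
  rcases a with _ | ⟨x, y⟩
  · rfl
  · show nMap p q σ (Brandt.pair x y) + _ = _
    rw [nMap_apply_pair]
    dsimp only [xi]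
    by_cases hy : y = p
    · rw [if_pos hy, pair_add_pair, if_neg hqk]
    · rw [if_neg hy, theta_add]

theorem t_nn_eq (p q q' : Fin n) (σ σ' : Perm (Fin n)) :
    nMap p q σ + nMap p q' σ'
      = sMap (σ'.symm q) p (Brandt.pair (σ (σ'.symm q)) q') := by
  funext a
  rcases a with _ | ⟨x, y⟩
  · rfl
  · show nMap p q σ (Brandt.pair x y) + nMap p q' σ' (Brandt.pair x y)
        = sMap _ _ _ (Brandt.pair x y)
    rw [nMap_apply_pair, nMap_apply_pair, sMap_apply]
    by_cases hy : y = p <;> by_cases hx : x = σ'.symm q <;>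
      simp_all [pair_add_pair, pair_eq_pair, theta_add, add_theta,
        Equiv.eq_symm_apply, eq_comm (b := q)]

theorem t_nn_ne (p q p' q' : Fin n) (σ σ' : Perm (Fin n)) (h : p ≠ p') :
    nMap p q σ + nMap p' q' σ' = xi (Brandt.theta n) := by
  funext a
  rcases a with _ | ⟨x, y⟩
  · rfl
  · show nMap p q σ (Brandt.pair x y) + nMap p' q' σ' (Brandt.pair x y) = _
    rw [nMap_apply_pair, nMap_apply_pair]
    dsimp only [xi]
    by_cases hy : y = p
    · rw [if_pos hy, if_neg (fun hy' => h (by rw [← hy, hy'])), add_theta]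
    · rw [if_neg hy, theta_add]

theorem t_ns_eq (p q k : Fin n) (σ : Perm (Fin n)) (α : Brandt n) :
    nMap p q σ + sMap k p α = sMap k p (Brandt.pair (σ k) q + α) := by
  funext a
  rcases a with _ | ⟨x, y⟩
  · rfl
  · show nMap p q σ (Brandt.pair x y) + sMap k p α (Brandt.pair x y)
        = sMap k p _ (Brandt.pair x y)
    rw [nMap_apply_pair, sMap_apply, sMap_apply]
    by_cases hy : y = p <;> by_cases hx : x = k <;>
      simp_all [pair_eq_pair, theta_add, add_theta]

theorem t_ns_ne (p q k l : Fin n) (σ : Perm (Fin n)) (α : Brandt n) (h : l ≠ p) :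
    nMap p q σ + sMap k l α = xi (Brandt.theta n) := by
  funext a
  rcases a with _ | ⟨x, y⟩
  · rfl
  · show nMap p q σ (Brandt.pair x y) + sMap k l α (Brandt.pair x y) = _
    rw [nMap_apply_pair, sMap_apply]
    dsimp only [xi]
    by_cases hx : Brandt.pair x y = Brandt.pair k l
    · rw [if_pos hx]
      have hy : y ≠ p := fun hy => h ((pair_eq_pair.mp hx).2 ▸ hy)
      rw [if_neg hy, theta_add]
    · rw [if_neg hx, add_theta]

theorem t_sn_eq (p q k : Fin n) (σ : Perm (Fin n)) (α : Brandt n) :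
    sMap k p α + nMap p q σ = sMap k p (α + Brandt.pair (σ k) q) := by
  funext a
  rcases a with _ | ⟨x, y⟩
  · rfl
  · show sMap k p α (Brandt.pair x y) + nMap p q σ (Brandt.pair x y)
        = sMap k p _ (Brandt.pair x y)
    rw [nMap_apply_pair, sMap_apply, sMap_apply]
    by_cases hy : y = p <;> by_cases hx : x = k <;>
      simp_all [pair_eq_pair, theta_add, add_theta]

theorem t_sn_ne (p q k l : Fin n) (σ : Perm (Fin n)) (α : Brandt n) (h : l ≠ p) :
    sMap k l α + nMap p q σ = xi (Brandt.theta n) := by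
  funext a
  rcases a with _ | ⟨x, y⟩
  · rfl
  · show sMap k l α (Brandt.pair x y) + nMap p q σ (Brandt.pair x y) = _
    rw [nMap_apply_pair, sMap_apply]
    dsimp only [xi]
    by_cases hx : Brandt.pair x y = Brandt.pair k l
    · rw [if_pos hx]
      have hy : y ≠ p := fun hy => h ((pair_eq_pair.mp hx).2 ▸ hy)
      rw [if_neg hy, add_theta]
    · rw [if_neg hx, theta_add]

theorem t_sc (k l : Fin n) (α c : Brandt n) :
    sMap k l α + xi c = sMap k l (α + c) := by
  funext a
  rcases a with _ | ⟨x, y⟩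
  · show Brandt.theta n + c = Brandt.theta n
    exact theta_add c
  · show sMap k l α (Brandt.pair x y) + c = sMap k l _ (Brandt.pair x y)
    rw [sMap_apply, sMap_apply]
    by_cases hx : Brandt.pair x y = Brandt.pair k l <;>
      simp_all [theta_add]

theorem t_cs (k l : Fin n) (α c : Brandt n) :
    xi c + sMap k l α = sMap k l (c + α) := by
  funext a
  rcases a with _ | ⟨x, y⟩
  · show c + Brandt.theta n = Brandt.theta n
    exact add_theta c
  · show c + sMap k l α (Brandt.pair x y) = sMap k l _ (Brandt.pair x y)
    rw [sMap_apply, sMap_apply]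
    by_cases hx : Brandt.pair x y = Brandt.pair k l <;>
      simp_all [add_theta]

theorem t_ss_eq (k l : Fin n) (α α' : Brandt n) :
    sMap k l α + sMap k l α' = sMap k l (α + α') := by
  funext a
  rcases a with _ | ⟨x, y⟩
  · show Brandt.theta n + Brandt.theta n = Brandt.theta n
    exact theta_add _
  · show sMap k l α (Brandt.pair x y) + sMap k l α' (Brandt.pair x y)
        = sMap k l _ (Brandt.pair x y)
    rw [sMap_apply, sMap_apply, sMap_apply]
    by_cases hx : Brandt.pair x y = Brandt.pair k l <;>
      simp_all [theta_add]

theorem t_ss_ne (k l k' l' : Fin n) (α α' : Brandt n) (h : ¬(k = k' ∧ l = l')) :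
    sMap k l α + sMap k' l' α' = xi (Brandt.theta n) := by
  funext a
  rcases a with _ | ⟨x, y⟩
  · show Brandt.theta n + Brandt.theta n = _
    simp [theta_add, xi]
  · show sMap k l α (Brandt.pair x y) + sMap k' l' α' (Brandt.pair x y) = _
    rw [sMap_apply, sMap_apply]
    dsimp only [xi]
    by_cases hx : Brandt.pair x y = Brandt.pair k l
    · rw [if_pos hx]
      have hx' : Brandt.pair x y ≠ Brandt.pair k' l' := by
        intro hc
        obtain ⟨h1, h2⟩ := pair_eq_pair.mp hx
        obtain ⟨h1', h2'⟩ := pair_eq_pair.mp hc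
        exact h ⟨h1 ▸ h1' ▸ rfl, h2 ▸ h2' ▸ rfl⟩
      rw [if_neg hx', add_theta]
    · rw [if_neg hx, theta_add]

end BrandtProof
namespace BrandtProof2
open Equiv BrandtProof

variable {n : ℕ}

/-- The automorphism of `B_n` induced by a permutation. -/
def autoMap (σ : Perm (Fin n)) : MB n := Option.map (Prod.map σ σ)

theorem autoMap_apply_none (σ : Perm (Fin n)) :
    autoMap σ (Brandt.theta n) = Brandt.theta n := rfl

theorem autoMap_apply_pair (σ : Perm (Fin n)) (i j : Fin n) :
    autoMap σ (Brandt.pair i j) = Brandt.pair (σ i) (σ j) := rfl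

theorem isEndo_autoMap (σ : Perm (Fin n)) : IsEndo (autoMap σ) := by
  intro a b
  rcases a with _ | ⟨i, j⟩
  · show autoMap σ (Brandt.theta n + b) = autoMap σ (Brandt.theta n) + autoMap σ b
    rw [theta_add, autoMap_apply_none, theta_add]
  · rcases b with _ | ⟨k, l⟩
    · show autoMap σ (Brandt.pair i j + Brandt.theta n)
        = autoMap σ (Brandt.pair i j) + autoMap σ (Brandt.theta n)
      rw [add_theta, autoMap_apply_none, add_theta]
    · show autoMap σ (Brandt.pair i j + Brandt.pair k l)
        = autoMap σ (Brandt.pair i j) + autoMap σ (Brandt.pair k l)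
      rw [pair_add_pair, autoMap_apply_pair, autoMap_apply_pair, pair_add_pair]
      by_cases h : j = k
      · rw [if_pos h, if_pos (by rw [h]), autoMap_apply_pair]
      · rw [if_neg h, if_neg (fun hc => h (σ.injective hc))]
        rfl

theorem isEndo_const_diag (t : Fin n) : IsEndo (xi (Brandt.pair t t) : MB n) := by
  intro a b
  show Brandt.pair t t = Brandt.pair t t + Brandt.pair t t
  rw [pair_add_pair, if_pos rfl]

theorem idempotent_cases {a : Brandt n} (h : a + a = a) :
    a = Brandt.theta n ∨ ∃ t, a = Brandt.pair t t := by
  rcases a with _ | ⟨i, j⟩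
  · exact Or.inl rfl
  · right
    have h' : Brandt.pair i j + Brandt.pair i j = Brandt.pair i j := h
    rw [pair_add_pair] at h'
    by_cases hij : j = i
    · exact ⟨i, show Brandt.pair i j = _ by rw [hij]⟩
    · rw [if_neg hij] at h'
      exact absurd h' (theta_ne_pair i j)

theorem add_right_diag_eq {a : Brandt n} {t : Fin n}
    (h : a + Brandt.pair t t = Brandt.pair t t) : a = Brandt.pair t t := by
  rcases a with _ | ⟨i, j⟩
  · have h' : Brandt.theta n + Brandt.pair t t = Brandt.pair t t := h
    rw [theta_add] at h'
    exact absurd h' (theta_ne_pair t t)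
  · have h' : Brandt.pair i j + Brandt.pair t t = Brandt.pair t t := h
    rw [pair_add_pair] at h'
    by_cases hjt : j = t
    · rw [if_pos hjt] at h'
      obtain ⟨h1, h2⟩ := pair_eq_pair.mp h'
      show Brandt.pair i j = _
      rw [hjt, h1]
    · rw [if_neg hjt] at h'
      exact absurd h' (theta_ne_pair t t)

theorem theta_add_theta : (Brandt.theta n) + Brandt.theta n = Brandt.theta n :=
  theta_add _

theorem pair_diag_add_self (i j : Fin n) (h : i ≠ j) :
    Brandt.pair i j + Brandt.pair i j = Brandt.theta n := by
  rw [pair_add_pair, if_neg (fun hc => h hc.symm)]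

/-- Classification of endomorphisms of the Brandt semigroup. -/
theorem isEndo_classify {g : MB n} (hg : IsEndo g) :
    g = xi (Brandt.theta n) ∨ (∃ t, g = xi (Brandt.pair t t)) ∨
      ∃ σ : Perm (Fin n), g = autoMap σ := by
  have hθ : g (Brandt.theta n) + g (Brandt.theta n) = g (Brandt.theta n) := by
    rw [← hg]; rw [theta_add_theta]
  rcases idempotent_cases hθ with hcase | ⟨t, ht⟩
  · -- g θ = θ
    by_cases hall : ∀ i, g (Brandt.pair i i) = Brandt.theta n
    · left
      funext a
      rcases a with _ | ⟨i, j⟩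
      · exact hcase
      · show g (Brandt.pair i j) = Brandt.theta n
        have h1 : Brandt.pair i i + Brandt.pair i j = Brandt.pair i j := by
          rw [pair_add_pair, if_pos rfl]
        rw [← h1, hg, hall i, theta_add]
    · right; right
      push_neg at hall
      obtain ⟨i0, hi0⟩ := hall
      -- every diagonal is nonzero
      have hdiagnz : ∀ i, g (Brandt.pair i i) ≠ Brandt.theta n := by
        intro j hj
        apply hi0
        have h1 : Brandt.pair i0 j + Brandt.pair j i0 = Brandt.pair i0 i0 := by
          rw [pair_add_pair, if_pos rfl]
        have h2 : Brandt.pair j j + Brandt.pair j i0 = Brandt.pair j i0 := by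
          rw [pair_add_pair, if_pos rfl]
        have h3 : g (Brandt.pair j i0) = Brandt.theta n := by
          rw [← h2, hg, hj, theta_add]
        rw [← h1, hg, h3, add_theta]
      have hdiag : ∀ i, ∃ t, g (Brandt.pair i i) = Brandt.pair t t := by
        intro i
        have : g (Brandt.pair i i) + g (Brandt.pair i i) = g (Brandt.pair i i) := by
          rw [← hg, pair_add_pair, if_pos rfl]
        rcases idempotent_cases this with h | h
        · exact absurd h (hdiagnz i)
        · exact h
      choose t ht using hdiag
      -- g (pair i j) = pair (t i) (t j)
      have hoff : ∀ i j, g (Brandt.pair i j) = Brandt.pair (t i) (t j) := by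
        intro i j
        have hnz : g (Brandt.pair i j) ≠ Brandt.theta n := by
          intro hz
          apply hdiagnz i
          have h1 : Brandt.pair i j + Brandt.pair j i = Brandt.pair i i := by
            rw [pair_add_pair, if_pos rfl]
          rw [← h1, hg, hz, theta_add]
        rcases hval : g (Brandt.pair i j) with _ | ⟨x, y⟩
        · exact absurd hval hnz
        · have hxy : g (Brandt.pair i j) = Brandt.pair x y := hval
          -- left absorption
          have h1 : Brandt.pair i i + Brandt.pair i j = Brandt.pair i j := by
            rw [pair_add_pair, if_pos rfl]
          have hL : Brandt.pair (t i) (t i) + Brandt.pair x y = Brandt.pair x y := by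
            rw [← ht i, ← hxy, ← hg, h1]
          have h2 : Brandt.pair i j + Brandt.pair j j = Brandt.pair i j := by
            rw [pair_add_pair, if_pos rfl]
          have hR : Brandt.pair x y + Brandt.pair (t j) (t j) = Brandt.pair x y := by
            rw [← ht j, ← hxy, ← hg, h2]
          rw [pair_add_pair] at hL hR
          by_cases hti : t i = x
      /- then -/
          · by_cases htj : y = t j
            · exact pair_eq_pair.mpr ⟨hti.symm, htj⟩
            · rw [if_neg htj] at hR
              exact absurd hR (theta_ne_pair x y)
          · rw [if_neg hti] at hL
            exact absurd hL (theta_ne_pair x y)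
      have tinj : Function.Injective t := by
        intro i j hij
        by_contra hne
        have hz : Brandt.pair i j + Brandt.pair i j = Brandt.theta n := by
          rw [pair_add_pair, if_neg (fun hc => hne hc.symm)]
        have e1 : g (Brandt.pair i j + Brandt.pair i j)
            = Brandt.pair (t i) (t j) + Brandt.pair (t i) (t j) := by
          rw [hg, hoff]
        rw [hz, hcase, pair_add_pair, if_pos hij.symm] at e1
        exact theta_ne_pair _ _ e1
      have tbij : Function.Bijective t := (Finite.injective_iff_bijective).mp tinj
      refine ⟨Equiv.ofBijective t tbij, ?_⟩
      funext a
      rcases a with _ | ⟨i, j⟩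
      · exact hcase
      · show g (Brandt.pair i j) = autoMap _ (Brandt.pair i j)
        rw [hoff, autoMap_apply_pair]
        rfl
  · -- g θ = pair t t : g is constant
    right; left
    refine ⟨t, ?_⟩
    funext a
    show g a = Brandt.pair t t
    have h1 : g a + g (Brandt.theta n) = g (Brandt.theta n) := by
      rw [← hg, add_theta]
    rw [ht] at h1
    exact add_right_diag_eq h1

end BrandtProof2
namespace BrandtProof3
open Equiv BrandtProof BrandtProof2

variable {n : ℕ}

theorem t_an (p' q : Fin n) (σ : Perm (Fin n)) :
    autoMap σ + xi (Brandt.pair p' q) = nMap (σ.symm p') q σ := by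
  funext a
  rcases a with _ | ⟨x, y⟩
  · rfl
  · show autoMap σ (Brandt.pair x y) + Brandt.pair p' q
        = nMap (σ.symm p') q σ (Brandt.pair x y)
    rw [autoMap_apply_pair, nMap_apply_pair, pair_add_pair]
    by_cases hy : σ y = p'
    · rw [if_pos hy, if_pos (by rw [← hy]; exact (σ.symm_apply_apply y).symm)]
    · rw [if_neg hy, if_neg (fun hc => hy (by rw [hc, σ.apply_symm_apply]))]

theorem t_ath (σ : Perm (Fin n)) :
    autoMap σ + xi (Brandt.theta n) = xi (Brandt.theta n) := t_fth _

/-- the four(three)-class carrier -/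
def FCl (n : ℕ) : Set (MB n) :=
  {f | (∃ c, f = xi c) ∨ (∃ p q σ, f = nMap p q σ) ∨ ∃ k l α, f = sMap k l α}

theorem fcl_add {f g : MB n} (hf : f ∈ FCl n) (hg : g ∈ FCl n) : f + g ∈ FCl n := by
  rcases hf with ⟨c, rfl⟩ | ⟨p, q, σ, rfl⟩ | ⟨k, l, α, rfl⟩
  · rcases hg with ⟨c', rfl⟩ | ⟨p, q, σ, rfl⟩ | ⟨k, l, α, rfl⟩
    · exact Or.inl ⟨c + c', t_cc c c'⟩
    · rcases c with _ | ⟨i, j⟩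
      · exact Or.inl ⟨_, t_thf _⟩
      · exact Or.inr (Or.inr ⟨_, _, _, t_cn i j p q σ⟩)
    · exact Or.inr (Or.inr ⟨_, _, _, t_cs k l α c⟩)
  · rcases hg with ⟨c', rfl⟩ | ⟨p', q', σ', rfl⟩ | ⟨k, l, α, rfl⟩
    · rcases c' with _ | ⟨i, j⟩
      · exact Or.inl ⟨_, t_fth _⟩
      · by_cases hq : q = i
        · subst hq; exact Or.inr (Or.inl ⟨_, _, _, t_nc_eq p q j σ⟩)
        · exact Or.inl ⟨_, t_nc_ne p q i j σ hq⟩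
    · by_cases hp : p = p'
      · subst hp; exact Or.inr (Or.inr ⟨_, _, _, t_nn_eq p q q' σ σ'⟩)
      · exact Or.inl ⟨_, t_nn_ne p q p' q' σ σ' hp⟩
    · by_cases hl : l = p
      · subst hl; exact Or.inr (Or.inr ⟨_, _, _, t_ns_eq l q k σ α⟩)
      · exact Or.inl ⟨_, t_ns_ne p q k l σ α hl⟩
  · rcases hg with ⟨c', rfl⟩ | ⟨p, q, σ, rfl⟩ | ⟨k', l', α', rfl⟩
    · exact Or.inr (Or.inr ⟨_, _, _, t_sc k l α c'⟩)
    · by_cases hl : l = p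
      · subst hl; exact Or.inr (Or.inr ⟨_, _, _, t_sn_eq l q k σ α⟩)
      · exact Or.inl ⟨_, t_sn_ne p q k l σ α hl⟩
    · by_cases hkl : k = k' ∧ l = l'
      · obtain ⟨rfl, rfl⟩ := hkl
        exact Or.inr (Or.inr ⟨_, _, _, t_ss_eq k l α α'⟩)
      · exact Or.inl ⟨_, t_ss_ne k l k' l' α α' hkl⟩

/-- `FCl` as an additive subsemigroup. -/
def FSub (n : ℕ) : AddSubsemigroup (MB n) where
  carrier := FCl n
  add_mem' := fcl_add

theorem affine_mem_FCl {f : MB n} (hf : IsAffine f) : f ∈ FCl n := by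
  obtain ⟨g, c, hg, rfl⟩ := hf
  rcases isEndo_classify hg with rfl | ⟨t, rfl⟩ | ⟨σ, rfl⟩
  · exact Or.inl ⟨_, t_thf _⟩
  · exact Or.inl ⟨_, t_cc _ _⟩
  · rcases c with _ | ⟨p', q⟩
    · exact Or.inl ⟨_, t_ath σ⟩
    · exact Or.inr (Or.inl ⟨_, _, _, t_an p' q σ⟩)

theorem aplus_subset_FCl : AplusSet n ⊆ FCl n := by
  intro f hf
  have : Aplus n ≤ FSub n := by
    rw [Aplus, AddSubsemigroup.closure_le]
    intro x hx
    exact affine_mem_FCl hx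
  exact this hf

end BrandtProof3
namespace BrandtProof4
open Equiv BrandtProof BrandtProof2 BrandtProof3

variable {n : ℕ}

theorem xi_inj {c c' : Brandt n} (h : xi c = xi c') : c = c' :=
  congrFun h (Brandt.theta n)

theorem nMap_inj {p q p' q' : Fin n} {σ σ' : Perm (Fin n)}
    (h : nMap p q σ = nMap p' q' σ') : p = p' ∧ q = q' ∧ σ = σ' := by
  have hp : p = p' := by
    by_contra hne
    have := congrFun h (Brandt.pair p p)
    rw [nMap_apply_pair, nMap_apply_pair, if_pos rfl, if_neg (fun hc => hne hc)] at this
    exact pair_ne_theta _ _ this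
  subst hp
  have hq : q = q' ∧ ∀ x, σ x = σ' x := by
    constructor
    · have := congrFun h (Brandt.pair p p)
      rw [nMap_apply_pair, nMap_apply_pair, if_pos rfl, if_pos rfl] at this
      exact (pair_eq_pair.mp this).2
    · intro x
      have := congrFun h (Brandt.pair x p)
      rw [nMap_apply_pair, nMap_apply_pair, if_pos rfl, if_pos rfl] at this
      exact (pair_eq_pair.mp this).1
  exact ⟨rfl, hq.1, Equiv.ext hq.2⟩

theorem xi_ne_nMap (c : Brandt n) (p q : Fin n) (σ : Perm (Fin n)) :
    xi c ≠ nMap p q σ := by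
  intro h
  rcases c with _ | ⟨i, j⟩
  · have := congrFun h (Brandt.pair p p)
    rw [nMap_apply_pair, if_pos rfl] at this
    exact theta_ne_pair _ _ this
  · have := congrFun h (Brandt.theta n)
    rw [nMap_apply_none] at this
    exact pair_ne_theta _ _ this

theorem sMap_ne_nMap (hn : 2 ≤ n) (k l : Fin n) (α : Brandt n)
    (p q : Fin n) (σ : Perm (Fin n)) : sMap k l α ≠ nMap p q σ := by
  intro h
  have : Nontrivial (Fin n) := Fin.nontrivial_iff_two_le.mpr hn
  obtain ⟨x, hx⟩ := exists_ne k
  have := congrFun h (Brandt.pair x p)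
  rw [nMap_apply_pair, if_pos rfl, sMap_apply,
    if_neg (fun hc => hx (pair_eq_pair.mp hc).1)] at this
  exact theta_ne_pair _ _ this

theorem xi_ne_sMap_pair (c : Brandt n) (k l i j : Fin n) :
    xi c ≠ sMap k l (Brandt.pair i j) := by
  intro h
  rcases c with _ | ⟨a, b⟩
  · have := congrFun h (Brandt.pair k l)
    rw [sMap_apply, if_pos rfl] at this
    exact theta_ne_pair _ _ this
  · have := congrFun h (Brandt.theta n)
    rw [sMap_apply, if_neg (theta_ne_pair k l)] at this
    exact pair_ne_theta _ _ this

theorem sMap_pair_inj {k l i j k' l' i' j' : Fin n}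
    (h : sMap k l (Brandt.pair i j) = sMap k' l' (Brandt.pair i' j')) :
    k = k' ∧ l = l' ∧ i = i' ∧ j = j' := by
  have h1 := congrFun h (Brandt.pair k l)
  rw [sMap_apply, sMap_apply, if_pos rfl] at h1
  by_cases hc : Brandt.pair k l = Brandt.pair k' l'
  · obtain ⟨rfl, rfl⟩ := pair_eq_pair.mp hc
    rw [if_pos rfl] at h1
    obtain ⟨rfl, rfl⟩ := pair_eq_pair.mp h1
    exact ⟨rfl, rfl, rfl, rfl⟩
  · rw [if_neg hc] at h1
    exact absurd h1 (pair_ne_theta _ _)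

theorem xi_pair_ne_theta_map (a b : Fin n) :
    xi (Brandt.pair a b) ≠ xi (Brandt.theta n) := by
  intro h
  exact pair_ne_theta a b (xi_inj h)

end BrandtProof4
namespace BrandtProof5
open Equiv BrandtProof BrandtProof2 BrandtProof3 BrandtProof4

variable {n : ℕ}

theorem xi_pair_ne_sMap' (a b k l : Fin n) (α : Brandt n) :
    xi (Brandt.pair a b) ≠ sMap k l α := by
  intro h
  have := congrFun h (Brandt.theta n)
  rw [sMap_apply, if_neg (theta_ne_pair k l)] at this
  exact pair_ne_theta _ _ this

theorem xi_theta_ne_sMap_ne_forms (hn : 2 ≤ n) {f : MB n}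
    (h : f = xi (Brandt.theta n) ∨ ∃ k l α, f = sMap k l α) :
    (∀ p q σ, f ≠ nMap p q σ) ∧ (∀ b, f ≠ xi (Brandt.pair b b)) := by
  rcases h with rfl | ⟨k, l, α, rfl⟩
  · constructor
    · intro p q σ; exact xi_ne_nMap _ p q σ
    · intro b h
      exact pair_ne_theta b b (xi_inj h).symm
  · constructor
    · intro p q σ; exact sMap_ne_nMap hn k l α p q σ
    · intro b h; exact xi_pair_ne_sMap' b b k l α h.symm

/-- carrier for independence proofs of the witness set -/
def W0 (n : ℕ) : Set (MB n) :=
  {f | (∃ p q σ, f = nMap p q σ) ∨ (∃ b, f = xi (Brandt.pair b b)) ∨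
    f = xi (Brandt.theta n) ∨ ∃ k l α, f = sMap k l α}

theorem w0_add (hn : 2 ≤ n) {x y : MB n} (hx : x ∈ W0 n) (hy : y ∈ W0 n) :
    x + y ∈ W0 n ∧ (x + y = x ∨
      ((∀ p q σ, x + y ≠ nMap p q σ) ∧ ∀ b, x + y ≠ xi (Brandt.pair b b))) := by
  have deg : ∀ f : MB n, (f = xi (Brandt.theta n) ∨ ∃ k l α, f = sMap k l α) →
      f ∈ W0 n ∧ (f = x ∨
        ((∀ p q σ, f ≠ nMap p q σ) ∧ ∀ b, f ≠ xi (Brandt.pair b b))) := by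
    intro f hf
    refine ⟨?_, Or.inr (xi_theta_ne_sMap_ne_forms hn hf)⟩
    rcases hf with rfl | ⟨k, l, α, rfl⟩
    · exact Or.inr (Or.inr (Or.inl rfl))
    · exact Or.inr (Or.inr (Or.inr ⟨k, l, α, rfl⟩))
  rcases hx with ⟨p, q, σ, rfl⟩ | ⟨b, rfl⟩ | rfl | ⟨k, l, α, rfl⟩
  · -- x = nMap
    rcases hy with ⟨p', q', σ', rfl⟩ | ⟨c, rfl⟩ | rfl | ⟨k', l', α', rfl⟩
    · by_cases hp : p = p'
      · subst hp; rw [t_nn_eq]; exact deg _ (Or.inr ⟨_, _, _, rfl⟩)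
      · rw [t_nn_ne p q p' q' σ σ' hp]; exact deg _ (Or.inl rfl)
    · by_cases hq : q = c
      · subst hq
        rw [t_nc_eq]
        exact ⟨Or.inl ⟨p, q, σ, rfl⟩, Or.inl rfl⟩
      · rw [t_nc_ne p q c c σ hq]; exact deg _ (Or.inl rfl)
    · rw [t_fth]; exact deg _ (Or.inl rfl)
    · by_cases hl : l' = p
      · subst hl; rw [t_ns_eq]; exact deg _ (Or.inr ⟨_, _, _, rfl⟩)
      · rw [t_ns_ne p q k' l' σ α' hl]; exact deg _ (Or.inl rfl)
  · -- x = diag const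
    rcases hy with ⟨p', q', σ', rfl⟩ | ⟨c, rfl⟩ | rfl | ⟨k', l', α', rfl⟩
    · rw [t_cn]; exact deg _ (Or.inr ⟨_, _, _, rfl⟩)
    · by_cases hb : b = c
      · subst hb
        rw [t_cc, pair_add_pair, if_pos rfl]
        exact ⟨Or.inr (Or.inl ⟨b, rfl⟩), Or.inl rfl⟩
      · rw [t_cc, pair_add_pair, if_neg hb]; exact deg _ (Or.inl rfl)
    · rw [t_fth]; exact deg _ (Or.inl rfl)
    · rw [t_cs]; exact deg _ (Or.inr ⟨_, _, _, rfl⟩)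
  · -- x = xi theta
    rw [t_thf]; exact deg _ (Or.inl rfl)
  · -- x = sMap
    rcases hy with ⟨p', q', σ', rfl⟩ | ⟨c, rfl⟩ | rfl | ⟨k', l', α', rfl⟩
    · by_cases hl : l = p'
      · subst hl; rw [t_sn_eq]; exact deg _ (Or.inr ⟨_, _, _, rfl⟩)
      · rw [t_sn_ne p' q' k l σ' α hl]; exact deg _ (Or.inl rfl)
    · rw [t_sc]; exact deg _ (Or.inr ⟨_, _, _, rfl⟩)
    · rw [t_fth]; exact deg _ (Or.inl rfl)
    · by_cases hkl : k = k' ∧ l = l'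
      · obtain ⟨rfl, rfl⟩ := hkl
        rw [t_ss_eq]; exact deg _ (Or.inr ⟨_, _, _, rfl⟩)
      · rw [t_ss_ne k l k' l' α α' hkl]; exact deg _ (Or.inl rfl)

/-- The witness set: all `n`-support maps together with all diagonal constants. -/
def Uw (n : ℕ) : Set (MB n) :=
  {f | (∃ p q σ, f = nMap p q σ) ∨ ∃ b, f = xi (Brandt.pair b b)}

theorem Uw_subset_W0 : Uw n ⊆ W0 n := by
  rintro f (h | h)
  · exact Or.inl h
  · exact Or.inr (Or.inl h)

theorem Uw_subset_Aplus : Uw n ⊆ AplusSet n := by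
  rintro f (⟨p, q, σ, rfl⟩ | ⟨b, rfl⟩) <;>
    apply AddSubsemigroup.subset_closure
  · refine ⟨autoMap σ, Brandt.pair (σ p) q, isEndo_autoMap σ, ?_⟩
    rw [t_an, σ.symm_apply_apply]
  · refine ⟨xi (Brandt.pair b b), Brandt.pair b b, isEndo_const_diag b, ?_⟩
    rw [t_cc, pair_add_pair, if_pos rfl]

/-- the subsemigroup used to verify independence -/
def WS (n : ℕ) (a : MB n) (hn : 2 ≤ n) (ha : a ∈ Uw n) : AddSubsemigroup (MB n) where
  carrier := {f | f ∈ W0 n ∧ f ≠ a}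
  add_mem' := by
    rintro x y ⟨hx, hxa⟩ ⟨hy, hya⟩
    obtain ⟨hmem, hcase⟩ := w0_add hn hx hy
    refine ⟨hmem, ?_⟩
    rcases hcase with he | ⟨hnn, hnd⟩
    · rw [he]; exact hxa
    · rcases ha with ⟨p, q, σ, rfl⟩ | ⟨b, rfl⟩
      · exact hnn p q σ
      · exact hnd b

theorem Uw_indep (hn : 2 ≤ n) : IndepSet (Uw n) := by
  intro a ha hmem
  have hle : AddSubsemigroup.closure (Uw n \ {a}) ≤ WS n a hn ha := by
    rw [AddSubsemigroup.closure_le]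
    rintro u ⟨hu, hne⟩
    exact ⟨Uw_subset_W0 hu, hne⟩
  exact (hle hmem).2 rfl

end BrandtProof5
namespace BrandtProof6
open Equiv BrandtProof BrandtProof2 BrandtProof3 BrandtProof4 BrandtProof5

variable {n : ℕ}

/-- parametrization of the witness set -/
def ew (n : ℕ) : (Fin n × Fin n × Perm (Fin n)) ⊕ Fin n → MB n :=
  fun x => Sum.elim (fun y => nMap y.1 y.2.1 y.2.2) (fun b => xi (Brandt.pair b b)) x

theorem ew_injective (hn : 2 ≤ n) : Function.Injective (ew n) := by
  rintro (⟨p, q, σ⟩ | b) (⟨p', q', σ'⟩ | b') h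
  · obtain ⟨h1, h2, h3⟩ := nMap_inj h
    simp only at h1 h2 h3
    simp [h1, h2, h3]
  · exact absurd h.symm (xi_ne_nMap _ _ _ _)
  · exact absurd h (xi_ne_nMap _ _ _ _)
  · obtain ⟨h1, h2⟩ := pair_eq_pair.mp (xi_inj h)
    rw [h1]

theorem Uw_eq_range : Uw n = Set.range (ew n) := by
  ext f
  constructor
  · rintro (⟨p, q, σ, rfl⟩ | ⟨b, rfl⟩)
    · exact ⟨Sum.inl (p, q, σ), rfl⟩
    · exact ⟨Sum.inr b, rfl⟩
  · rintro ⟨(⟨p, q, σ⟩ | b), rfl⟩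
    · exact Or.inl ⟨p, q, σ, rfl⟩
    · exact Or.inr ⟨b, rfl⟩

theorem Uw_ncard (hn : 2 ≤ n) : (Uw n).ncard = n.factorial * n ^ 2 + n := by
  rw [Uw_eq_range]
  rw [← Nat.card_coe_set_eq, Nat.card_range_of_injective (ew_injective hn)]
  simp only [Nat.card_eq_fintype_card, Fintype.card_sum, Fintype.card_prod,
    Fintype.card_perm, Fintype.card_fin]
  ring

end BrandtProof6
namespace BrandtProof7
open Equiv BrandtProof BrandtProof2 BrandtProof3 BrandtProof4 BrandtProof5 BrandtProof6
open Finset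

open scoped Classical

variable {n : ℕ}

theorem dep2 {U : Set (MB n)} (hind : IndepSet U) {a x y : MB n}
    (ha : a ∈ U) (hx : x ∈ U) (hy : y ∈ U) (hxa : x ≠ a) (hya : y ≠ a)
    (hsum : x + y = a) : False := by
  apply hind a ha
  have hmem : x + y ∈ AddSubsemigroup.closure (U \ {a}) :=
    AddSubsemigroup.add_mem _
      (AddSubsemigroup.subset_closure ⟨hx, by simpa using hxa⟩)
      (AddSubsemigroup.subset_closure ⟨hy, by simpa using hya⟩)
  rw [hsum] at hmem
  exact hmem

theorem card_perm_apply_eq (hn : 1 ≤ n) (k i : Fin n) :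
    (Finset.univ.filter fun σ : Perm (Fin n) => σ k = i).card = (n - 1).factorial := by
  set c : Fin n → ℕ := fun i => (Finset.univ.filter fun σ : Perm (Fin n) => σ k = i).card
    with hc
  have hcc : ∀ i i' : Fin n, c i = c i' := by
    intro i i'
    apply Finset.card_bij' (fun σ _ => Equiv.swap i i' * σ) (fun σ _ => Equiv.swap i i' * σ)
    · intro σ hσ
      simp only [Finset.mem_filter, Finset.mem_univ, true_and] at hσ ⊢
      rw [Equiv.Perm.mul_apply, hσ, Equiv.swap_apply_left]
    · intro σ hσ
      simp only [Finset.mem_filter, Finset.mem_univ, true_and] at hσ ⊢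
      rw [Equiv.Perm.mul_apply, hσ, Equiv.swap_apply_right]
    · intro σ hσ
      rw [← mul_assoc, Equiv.swap_mul_self, one_mul]
    · intro σ hσ
      rw [← mul_assoc, Equiv.swap_mul_self, one_mul]
  have hsum : ∑ i' ∈ (Finset.univ : Finset (Fin n)), c i' = n.factorial := by
    rw [hc]
    rw [← Finset.card_eq_sum_card_fiberwise (f := fun σ : Perm (Fin n) => σ k)
      (fun σ _ => Finset.mem_univ (σ k))]
    simp [Fintype.card_perm]
  have hconst : ∑ i' ∈ (Finset.univ : Finset (Fin n)), c i' = n * c i := by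
    rw [Finset.sum_congr rfl (fun i' _ => hcc i' i)]
    simp [mul_comm]
  have hn0 : 0 < n := hn
  have : n * c i = n * (n - 1).factorial := by
    rw [← hconst, hsum, Nat.mul_factorial_pred hn0.ne']
  exact Nat.eq_of_mul_eq_mul_left hn0 this

noncomputable def NFin (n : ℕ) (U : Set (MB n)) : Finset (Fin n × Fin n × Perm (Fin n)) :=
  Finset.univ.filter fun x => nMap x.1 x.2.1 x.2.2 ∈ U

noncomputable def MFin (n : ℕ) (U : Set (MB n)) : Finset (Fin n × Fin n × Perm (Fin n)) :=
  Finset.univ.filter fun x => ¬ (nMap x.1 x.2.1 x.2.2 ∈ U)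

noncomputable def SFin (n : ℕ) (U : Set (MB n)) : Finset (Fin n × Fin n × Fin n × Fin n) :=
  Finset.univ.filter fun s => sMap s.1 s.2.1 (Brandt.pair s.2.2.1 s.2.2.2) ∈ U

noncomputable def EFin (n : ℕ) (U : Set (MB n)) : Finset (Fin n × Fin n) :=
  Finset.univ.filter fun e => xi (Brandt.pair e.1 e.2) ∈ U

theorem NM_card (U : Set (MB n)) :
    (NFin n U).card + (MFin n U).card = n ^ 2 * n.factorial := by
  rw [NFin, MFin, Finset.card_filter_add_card_filter_not]
  simp [Fintype.card_perm]
  ring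

theorem cover_noz {U : Set (MB n)} (hsub : U ⊆ AplusSet n)
    (hz : xi (Brandt.theta n) ∉ U) :
    (Set.toFinite U).toFinset.card ≤ (EFin n U).card + (NFin n U).card + (SFin n U).card := by
  have hcov : (Set.toFinite U).toFinset ⊆
      ((EFin n U).image fun e => xi (Brandt.pair e.1 e.2)) ∪
      ((NFin n U).image fun x => nMap x.1 x.2.1 x.2.2) ∪
      ((SFin n U).image fun s => sMap s.1 s.2.1 (Brandt.pair s.2.2.1 s.2.2.2)) := by
    intro u hu
    rw [Set.Finite.mem_toFinset] at hu
    have hF := aplus_subset_FCl (hsub hu)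
    simp only [Finset.mem_union, Finset.mem_image]
    rcases hF with ⟨c, rfl⟩ | ⟨p, q, σ, rfl⟩ | ⟨k, l, α, rfl⟩
    · rcases c with _ | ⟨a, b⟩
      · exact absurd hu hz
      · exact Or.inl (Or.inl ⟨(a, b), by simp only [EFin, Finset.mem_filter, Finset.mem_univ, true_and]; exact hu, rfl⟩)
    · exact Or.inl (Or.inr ⟨(p, q, σ), by simp only [NFin, Finset.mem_filter, Finset.mem_univ, true_and]; exact hu, rfl⟩)
    · rcases α with _ | ⟨i, j⟩
      · have he : (sMap k l (none : Option (Fin n × Fin n)) : MB n)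
            = xi (Brandt.theta n) := sMap_theta k l
        exact absurd (he ▸ hu) hz
      · exact Or.inr ⟨(k, l, i, j), by simp only [SFin, Finset.mem_filter, Finset.mem_univ, true_and]; exact hu, rfl⟩
  refine le_trans (Finset.card_le_card hcov) ?_
  refine le_trans (Finset.card_union_le _ _) ?_
  refine le_trans (Nat.add_le_add_right (Finset.card_union_le _ _) _) ?_
  exact Nat.add_le_add (Nat.add_le_add (Finset.card_image_le) (Finset.card_image_le))
    (Finset.card_image_le)

theorem cover_z {U : Set (MB n)} (hsub : U ⊆ AplusSet n) :
    (Set.toFinite U).toFinset.card ≤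
      1 + ((EFin n U).card + (NFin n U).card + (SFin n U).card) := by
  have hcov : (Set.toFinite U).toFinset ⊆
      ({xi (Brandt.theta n)} : Finset (MB n)) ∪
      (((EFin n U).image fun e => xi (Brandt.pair e.1 e.2)) ∪
      ((NFin n U).image fun x => nMap x.1 x.2.1 x.2.2) ∪
      ((SFin n U).image fun s => sMap s.1 s.2.1 (Brandt.pair s.2.2.1 s.2.2.2))) := by
    intro u hu
    rw [Set.Finite.mem_toFinset] at hu
    have hF := aplus_subset_FCl (hsub hu)
    simp only [Finset.mem_union, Finset.mem_image, Finset.mem_singleton]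
    rcases hF with ⟨c, rfl⟩ | ⟨p, q, σ, rfl⟩ | ⟨k, l, α, rfl⟩
    · rcases c with _ | ⟨a, b⟩
      · exact Or.inl rfl
      · exact Or.inr (Or.inl (Or.inl ⟨(a, b), by simp only [EFin, Finset.mem_filter, Finset.mem_univ, true_and]; exact hu, rfl⟩))
    · exact Or.inr (Or.inl (Or.inr ⟨(p, q, σ), by simp only [NFin, Finset.mem_filter, Finset.mem_univ, true_and]; exact hu, rfl⟩))
    · rcases α with _ | ⟨i, j⟩
      · have he : (sMap k l (none : Option (Fin n × Fin n)) : MB n)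
            = xi (Brandt.theta n) := sMap_theta k l
        exact Or.inl he
      · exact Or.inr (Or.inr ⟨(k, l, i, j), by simp only [SFin, Finset.mem_filter, Finset.mem_univ, true_and]; exact hu, rfl⟩)
  refine le_trans (Finset.card_le_card hcov) ?_
  refine le_trans (Finset.card_union_le _ _) ?_
  refine Nat.add_le_add (le_of_eq (Finset.card_singleton _)) ?_
  refine le_trans (Finset.card_union_le _ _) ?_
  refine le_trans (Nat.add_le_add_right (Finset.card_union_le _ _) _) ?_
  exact Nat.add_le_add (Nat.add_le_add (Finset.card_image_le) (Finset.card_image_le))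
    (Finset.card_image_le)

end BrandtProof7
namespace BrandtProof8
open Equiv BrandtProof BrandtProof2 BrandtProof3 BrandtProof4 BrandtProof5 BrandtProof6 BrandtProof7
open Finset

open scoped Classical

variable {n : ℕ}

theorem zcase_bound (hn : 6 ≤ n) {U : Set (MB n)} (hsub : U ⊆ AplusSet n)
    (hind : IndepSet U) (hz : xi (Brandt.theta n) ∈ U) :
    (Set.toFinite U).toFinset.card ≤ n.factorial * n ^ 2 + n := by
  have hE1 : (EFin n U).card ≤ 1 := by
    have hdiag : ∀ a b : Fin n, xi (Brandt.pair a b) ∈ U → a = b := by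
      intro a b hab
      by_contra hne
      refine dep2 hind hz hab hab (xi_pair_ne_theta_map a b) (xi_pair_ne_theta_map a b) ?_
      rw [t_cc, pair_add_pair, if_neg (fun h => hne h.symm)]
    refine Finset.card_le_one.mpr ?_
    intro e he e' he'
    obtain ⟨a, b⟩ := e
    obtain ⟨a', b'⟩ := e'
    simp only [EFin, Finset.mem_filter, Finset.mem_univ, true_and] at he he'
    have h1 := hdiag a b he
    have h2 := hdiag a' b' he'
    have h3 : a = a' := by
      by_contra hne
      refine dep2 hind hz he he' (xi_pair_ne_theta_map _ _) (xi_pair_ne_theta_map _ _) ?_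
      rw [t_cc, pair_add_pair, if_neg (fun h => hne (h1.trans h))]
    exact Prod.ext h3 ((h1.symm.trans h3).trans h2)
  have hS1 : (SFin n U).card ≤ 1 := by
    have hsne : ∀ k l i j : Fin n, sMap k l (Brandt.pair i j) ≠ xi (Brandt.theta n) :=
      fun k l i j h => (xi_ne_sMap_pair _ k l i j) h.symm
    have hsdiag : ∀ k l i j : Fin n, sMap k l (Brandt.pair i j) ∈ U → j = i := by
      intro k l i j hs
      by_contra hne
      refine dep2 hind hz hs hs (hsne k l i j) (hsne k l i j) ?_
      rw [t_ss_eq, pair_add_pair, if_neg hne, sMap_theta]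
    refine Finset.card_le_one.mpr ?_
    intro s hs s' hs'
    obtain ⟨k, l, i, j⟩ := s
    obtain ⟨k', l', i', j'⟩ := s'
    simp only [SFin, Finset.mem_filter, Finset.mem_univ, true_and] at hs hs'
    have h1 := hsdiag _ _ _ _ hs
    have h2 := hsdiag _ _ _ _ hs'
    have hkl : k = k' ∧ l = l' := by
      by_contra hne
      refine dep2 hind hz hs hs' (hsne _ _ _ _) (hsne _ _ _ _) ?_
      rw [t_ss_ne _ _ _ _ _ _ hne, ]
    obtain ⟨rfl, rfl⟩ := hkl
    have hval : i = i' := by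
      by_contra hne
      refine dep2 hind hz hs hs' (hsne _ _ _ _) (hsne _ _ _ _) ?_
      rw [t_ss_eq, pair_add_pair, if_neg (fun h => hne (by rw [← h1, h])), sMap_theta]
    have hj : j = j' := by rw [h1, hval, ← h2]
    rw [hval, hj]
  have hNp : ∀ x ∈ NFin n U, ∀ x' ∈ NFin n U, x.1 = x'.1 := by
    intro x hx x' hx'
    simp only [NFin, Finset.mem_filter, Finset.mem_univ, true_and] at hx hx'
    by_contra hne
    refine dep2 hind hz hx hx' ((xi_ne_nMap _ _ _ _).symm) ((xi_ne_nMap _ _ _ _).symm) ?_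
    rw [t_nn_ne _ _ _ _ _ _ hne]
  have hN : (NFin n U).card ≤ n * n.factorial := by
    have : (NFin n U).card ≤ (Finset.univ : Finset (Fin n × Perm (Fin n))).card := by
      apply Finset.card_le_card_of_injOn (fun x => x.2) (fun x _ => Finset.mem_univ _)
      intro x hx x' hx' hxx
      have := hNp x (by simpa using hx) x' (by simpa using hx')
      exact Prod.ext this hxx
    simpa [Fintype.card_perm] using this
  refine le_trans (cover_z hsub) ?_
  have : 1 + ((EFin n U).card + (NFin n U).card + (SFin n U).card)
      ≤ 1 + (1 + n * n.factorial + 1) := by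
    exact Nat.add_le_add_left (Nat.add_le_add (Nat.add_le_add hE1 hN) hS1) 1
  refine le_trans this ?_
  have h3 : 1 + (1 + n * n.factorial + 1) = 3 + n * n.factorial := by ring
  rw [h3, Nat.add_comm (n.factorial * n ^ 2) n]
  exact Nat.add_le_add (by omega) (by
    calc n * n.factorial = n.factorial * n := Nat.mul_comm _ _
    _ ≤ n.factorial * n ^ 2 := Nat.mul_le_mul_left _ (Nat.le_self_pow two_ne_zero n))

end BrandtProof8
namespace BrandtProof9
open Equiv BrandtProof BrandtProof2 BrandtProof3 BrandtProof4 BrandtProof5 BrandtProof6 BrandtProof7 BrandtProof8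
open Finset

open scoped Classical

variable {n : ℕ}

theorem fact_big (hn : 6 ≤ n) : 2 * n ^ 2 + 2 * n ≤ (n - 1).factorial := by
  induction n, hn using Nat.le_induction with
  | base => norm_num [Nat.factorial]
  | succ m hm ih =>
    have hm0 : 0 < m := by omega
    have h1 : m + 1 - 1 = m := by omega
    rw [h1, ← Nat.mul_factorial_pred hm0.ne']
    have h2 : 2 * (m + 1) ^ 2 + 2 * (m + 1) ≤ 2 * (2 * m ^ 2 + 2 * m) := by nlinarith
    refine le_trans h2 ?_
    refine le_trans (Nat.mul_le_mul_left 2 ih) ?_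
    exact Nat.mul_le_mul_right _ (by omega)

/-- key inequality: the singleton maps and off-diagonal constants of an
independent set are at most as many as the missing `n`-support maps -/
theorem SE_le_M (hn : 6 ≤ n) {U : Set (MB n)} (hind : IndepSet U) :
    (SFin n U).card + ((EFin n U).filter fun e => ¬ e.1 = e.2).card ≤ (MFin n U).card := by
  have hn2 : 2 ≤ n := by omega
  have hn1 : 0 < n := by omega
  set SF := SFin n U with hSF
  set MF := MFin n U with hMF
  set EFo := (EFin n U).filter fun e => ¬ e.1 = e.2 with hEFo
  -- constraints
  have C1 : ∀ k l i j : Fin n, sMap k l (Brandt.pair i j) ∈ U →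
      ∀ (σ σ' : Perm (Fin n)), σ k = i →
      nMap l (σ' k) σ ∈ U → nMap l j σ' ∈ U → False := by
    intro k l i j hs σ σ' hσk h1 h2
    refine dep2 hind hs h1 h2 ((sMap_ne_nMap hn2 _ _ _ _ _ _).symm)
      ((sMap_ne_nMap hn2 _ _ _ _ _ _).symm) ?_
    rw [t_nn_eq, Equiv.symm_apply_apply, hσk]
  have C2 : ∀ a b : Fin n, ¬ a = b → xi (Brandt.pair a b) ∈ U →
      ∀ (p : Fin n) (σ : Perm (Fin n)), nMap p a σ ∈ U → nMap p b σ ∈ U → False := by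
    intro a b hab he p σ h1 h2
    refine dep2 hind h2 h1 he (fun h => hab (nMap_inj h).2.1) (xi_ne_nMap _ _ _ _) ?_
    rw [t_nc_eq]
  -- incidence conditions
  have hSlow : ∀ s ∈ SF, (n - 1).factorial ≤
      (MF.filter fun m => m.1 = s.2.1 ∧
        (m.2.2 s.1 = s.2.2.1 ∨ m.2.1 = s.2.2.2)).card := by
    intro s hs
    obtain ⟨k, l, i, j⟩ := s
    simp only [hSF, SFin, Finset.mem_filter, Finset.mem_univ, true_and] at hs
    by_cases hR : ∃ σ' : Perm (Fin n), nMap l j σ' ∈ U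
    · obtain ⟨σ', hσ'⟩ := hR
      rw [← card_perm_apply_eq hn1 k i]
      apply Finset.card_le_card_of_injOn (fun σ => (l, σ' k, σ))
      · intro σ hσ
        simp only [Finset.mem_coe, Finset.mem_filter, Finset.mem_univ, true_and] at hσ
        refine Finset.mem_filter.mpr ⟨?_, rfl, Or.inl hσ⟩
        rw [hMF, MFin]
        exact Finset.mem_filter.mpr
          ⟨Finset.mem_univ _, fun hmem => C1 k l i j hs σ σ' hσ hmem hσ'⟩
      · intro σ h1 σ2 h2 heq
        exact congrArg (fun t => t.2.2) heq
    · push_neg at hR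
      refine le_trans (Nat.factorial_le (Nat.sub_le n 1)) ?_
      have hcard : (Finset.univ : Finset (Perm (Fin n))).card = n.factorial := by
        simp [Fintype.card_perm]
      rw [← hcard]
      apply Finset.card_le_card_of_injOn (fun σ' => (l, j, σ'))
      · intro σ' _
        refine Finset.mem_filter.mpr ⟨?_, rfl, Or.inr rfl⟩
        rw [hMF, MFin]
        exact Finset.mem_filter.mpr ⟨Finset.mem_univ _, hR σ'⟩
      · intro σ h1 σ2 h2 heq
        exact congrArg (fun t => t.2.2) heq
  have hElow : ∀ e ∈ EFo, (n - 1).factorial ≤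
      (MF.filter fun m => m.2.1 = e.1 ∨ m.2.1 = e.2).card := by
    intro e he
    obtain ⟨a, b⟩ := e
    simp only [hEFo, EFin, Finset.mem_filter, Finset.mem_univ, true_and] at he
    obtain ⟨heU, hab⟩ := he
    have key : ∀ (p : Fin n) (σ : Perm (Fin n)), nMap p a σ ∉ U ∨ nMap p b σ ∉ U := by
      intro p σ
      by_contra hc
      push_neg at hc
      exact C2 a b hab heU p σ hc.1 hc.2
    have hstep : (Finset.univ : Finset (Fin n × Perm (Fin n))).card ≤
        (MF.filter fun m => m.2.1 = a ∨ m.2.1 = b).card := by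
      apply Finset.card_le_card_of_injOn
        (fun x => (x.1, if nMap x.1 a x.2 ∈ U then b else a, x.2))
      · intro x _
        by_cases hmem : nMap x.1 a x.2 ∈ U
        · refine Finset.mem_filter.mpr ⟨?_, ?_⟩
          · rw [hMF, MFin]
            refine Finset.mem_filter.mpr ⟨Finset.mem_univ _, ?_⟩
            simp only [if_pos hmem]
            rcases key x.1 x.2 with h | h
            · exact absurd hmem h
            · exact h
          · simp only [if_pos hmem]
            exact Or.inr trivial
        · refine Finset.mem_filter.mpr ⟨?_, ?_⟩
          · rw [hMF, MFin]
            refine Finset.mem_filter.mpr ⟨Finset.mem_univ _, ?_⟩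
            simp only [if_neg hmem]
            exact hmem
          · simp only [if_neg hmem]
            exact Or.inl trivial
      · intro x h1 x' h2 heq
        have e1 : x.1 = x'.1 := congrArg (fun t => t.1) heq
        have e3 : x.2 = x'.2 := congrArg (fun t => t.2.2) heq
        exact Prod.ext e1 e3
    refine le_trans ?_ hstep
    have : (Finset.univ : Finset (Fin n × Perm (Fin n))).card = n * n.factorial := by
      simp [Fintype.card_perm]
    rw [this]
    calc (n - 1).factorial ≤ n.factorial := Nat.factorial_le (Nat.sub_le n 1)
      _ ≤ n * n.factorial := Nat.le_mul_of_pos_left _ hn1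
  have hSdeg : ∀ m ∈ MF, ((SF.filter fun s => m.1 = s.2.1 ∧
      (m.2.2 s.1 = s.2.2.1 ∨ m.2.1 = s.2.2.2))).card ≤ 2 * n ^ 2 := by
    intro m _
    have htarget : (Finset.univ : Finset ((Fin n × Fin n) ⊕ (Fin n × Fin n))).card
        = 2 * n ^ 2 := by
      simp [Fintype.card_sum]
      ring
    rw [← htarget]
    apply Finset.card_le_card_of_injOn
      (fun s => if m.2.2 s.1 = s.2.2.1 then Sum.inl (s.1, s.2.2.2)
        else Sum.inr (s.1, s.2.2.1))
    · intro s _; exact Finset.mem_univ _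
    · intro s hs s' hs' heq
      beta_reduce at heq
      simp only [Finset.mem_coe, Finset.mem_filter] at hs hs'
      obtain ⟨-, hl, hd⟩ := hs
      obtain ⟨-, hl', hd'⟩ := hs'
      have hll : s.2.1 = s'.2.1 := by rw [← hl, hl']
      by_cases h1 : m.2.2 s.1 = s.2.2.1
      · by_cases h2 : m.2.2 s'.1 = s'.2.2.1
        · rw [if_pos h1, if_pos h2] at heq
          have hpair := Sum.inl.inj heq
          have hk : s.1 = s'.1 := (Prod.ext_iff.mp hpair).1
          have hj : s.2.2.2 = s'.2.2.2 := (Prod.ext_iff.mp hpair).2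
          have hi : s.2.2.1 = s'.2.2.1 := by rw [← h1, ← h2, hk]
          exact Prod.ext hk (Prod.ext hll (Prod.ext hi hj))
        · rw [if_pos h1, if_neg h2] at heq
          simp at heq
      · by_cases h2 : m.2.2 s'.1 = s'.2.2.1
        · rw [if_neg h1, if_pos h2] at heq
          simp at heq
        · rw [if_neg h1, if_neg h2] at heq
          have hpair := Sum.inr.inj heq
          have hk : s.1 = s'.1 := (Prod.ext_iff.mp hpair).1
          have hi : s.2.2.1 = s'.2.2.1 := (Prod.ext_iff.mp hpair).2
          have hj : s.2.2.2 = s'.2.2.2 := by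
            rcases hd with p | p
            · exact absurd p h1
            · rcases hd' with p' | p'
              · exact absurd p' h2
              · exact p.symm.trans p'
          exact Prod.ext hk (Prod.ext hll (Prod.ext hi hj))
  have hEdeg : ∀ m ∈ MF, ((EFo.filter fun e => m.2.1 = e.1 ∨ m.2.1 = e.2)).card
      ≤ 2 * n := by
    intro m _
    have htarget : (Finset.univ : Finset (Fin n ⊕ Fin n)).card = 2 * n := by
      simp [Fintype.card_sum]
      ring
    rw [← htarget]
    apply Finset.card_le_card_of_injOn
      (fun e => if m.2.1 = e.1 then Sum.inl e.2 else Sum.inr e.1)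
    · intro e _; exact Finset.mem_univ _
    · intro e he e' he' heq
      beta_reduce at heq
      simp only [Finset.mem_coe, Finset.mem_filter] at he he'
      obtain ⟨-, hd⟩ := he
      obtain ⟨-, hd'⟩ := he'
      by_cases h1 : m.2.1 = e.1
      · by_cases h2 : m.2.1 = e'.1
        · rw [if_pos h1, if_pos h2] at heq
          exact Prod.ext (h1.symm.trans h2) (Sum.inl.inj heq)
        · rw [if_pos h1, if_neg h2] at heq
          simp at heq
      · by_cases h2 : m.2.1 = e'.1
        · rw [if_neg h1, if_pos h2] at heq
          simp at heq
        · rw [if_neg h1, if_neg h2] at heq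
          have h3 : m.2.1 = e.2 := hd.resolve_left h1
          have h4 : m.2.1 = e'.2 := hd'.resolve_left h2
          exact Prod.ext (Sum.inr.inj heq) (h3.symm.trans h4)
  -- double counting
  have swapS : ∑ s ∈ SF, (MF.filter fun m => m.1 = s.2.1 ∧
      (m.2.2 s.1 = s.2.2.1 ∨ m.2.1 = s.2.2.2)).card
      = ∑ m ∈ MF, (SF.filter fun s => m.1 = s.2.1 ∧
      (m.2.2 s.1 = s.2.2.1 ∨ m.2.1 = s.2.2.2)).card := by
    simp only [Finset.card_filter]
    exact Finset.sum_comm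
  have swapE : ∑ e ∈ EFo, (MF.filter fun m => m.2.1 = e.1 ∨ m.2.1 = e.2).card
      = ∑ m ∈ MF, (EFo.filter fun e => m.2.1 = e.1 ∨ m.2.1 = e.2).card := by
    simp only [Finset.card_filter]
    exact Finset.sum_comm
  have hSsum : SF.card * (n - 1).factorial ≤ MF.card * (2 * n ^ 2) := by
    calc SF.card * (n - 1).factorial = ∑ _s ∈ SF, (n - 1).factorial := by
          rw [Finset.sum_const, smul_eq_mul]
      _ ≤ ∑ s ∈ SF, (MF.filter fun m => m.1 = s.2.1 ∧
            (m.2.2 s.1 = s.2.2.1 ∨ m.2.1 = s.2.2.2)).card := Finset.sum_le_sum hSlow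
      _ = _ := swapS
      _ ≤ ∑ _m ∈ MF, 2 * n ^ 2 := Finset.sum_le_sum hSdeg
      _ = MF.card * (2 * n ^ 2) := by rw [Finset.sum_const, smul_eq_mul]
  have hEsum : EFo.card * (n - 1).factorial ≤ MF.card * (2 * n) := by
    calc EFo.card * (n - 1).factorial = ∑ _e ∈ EFo, (n - 1).factorial := by
          rw [Finset.sum_const, smul_eq_mul]
      _ ≤ ∑ e ∈ EFo, (MF.filter fun m => m.2.1 = e.1 ∨ m.2.1 = e.2).card :=
          Finset.sum_le_sum hElow
      _ = _ := swapE
      _ ≤ ∑ _m ∈ MF, 2 * n := Finset.sum_le_sum hEdeg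
      _ = MF.card * (2 * n) := by rw [Finset.sum_const, smul_eq_mul]
  have htot : (SF.card + EFo.card) * (n - 1).factorial
      ≤ MF.card * (n - 1).factorial := by
    calc (SF.card + EFo.card) * (n - 1).factorial
        = SF.card * (n - 1).factorial + EFo.card * (n - 1).factorial := by ring
      _ ≤ MF.card * (2 * n ^ 2) + MF.card * (2 * n) := Nat.add_le_add hSsum hEsum
      _ = MF.card * (2 * n ^ 2 + 2 * n) := by ring
      _ ≤ MF.card * (n - 1).factorial :=
          Nat.mul_le_mul_left _ (fact_big hn)
  exact Nat.le_of_mul_le_mul_right htot (Nat.factorial_pos _)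

end BrandtProof9
namespace BrandtProof10
open Equiv BrandtProof BrandtProof2 BrandtProof3 BrandtProof4 BrandtProof5 BrandtProof6 BrandtProof7 BrandtProof8 BrandtProof9
open Finset

open scoped Classical

variable {n : ℕ}

theorem upper_bound (hn : 6 ≤ n) {U : Set (MB n)} (hsub : U ⊆ AplusSet n)
    (hind : IndepSet U) : U.ncard ≤ n.factorial * n ^ 2 + n := by
  rw [Set.ncard_eq_toFinset_card U]
  by_cases hz : xi (Brandt.theta n) ∈ U
  · exact zcase_bound hn hsub hind hz
  · refine le_trans (cover_noz hsub hz) ?_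
    have h1 : ((EFin n U).filter fun e => e.1 = e.2).card
        + ((EFin n U).filter fun e => ¬ e.1 = e.2).card = (EFin n U).card :=
      Finset.card_filter_add_card_filter_not _
    have h2 : ((EFin n U).filter fun e => e.1 = e.2).card ≤ n := by
      have : ((EFin n U).filter fun e => e.1 = e.2).card
          ≤ (Finset.univ : Finset (Fin n)).card := by
        apply Finset.card_le_card_of_injOn (fun e => e.1) (fun e _ => Finset.mem_univ _)
        intro e he e' he' heq
        beta_reduce at heq
        simp only [Finset.mem_coe, Finset.mem_filter] at he he'
        exact Prod.ext heq (by rw [← he.2, ← he'.2, heq])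
      simpa using this
    have h3 := SE_le_M hn hind
    have h4 := NM_card (n := n) U
    have h5 : n.factorial * n ^ 2 = n ^ 2 * n.factorial := Nat.mul_comm _ _
    linarith
end BrandtProof10
/-- For `n ≥ 6`, the upper rank of `A⁺(Bₙ)` is
`r₄(A⁺(Bₙ)) = (n!)·n² + n`. -/
theorem stmt_16 (n : ℕ) (hn : 6 ≤ n) :
    IsGreatest {m : ℕ | ∃ U : Set (MB n), U ⊆ AplusSet n ∧ IndepSet U ∧ U.ncard = m}
      (n.factorial * n ^ 2 + n) := by
  constructor
  · exact ⟨BrandtProof5.Uw n, BrandtProof5.Uw_subset_Aplus,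
      BrandtProof5.Uw_indep (by omega), BrandtProof6.Uw_ncard (by omega)⟩
  · rintro m ⟨U, hsub, hind, rfl⟩
    exact BrandtProof10.upper_bound hn hsub hind
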